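/- Let (g,R,P,S) be an admissible quadruple for the differential problem in ℝⁿ on [a,b] and let λ ∈ ℝ. Suppose u and v are C² functions [a,b] → ℝⁿ satisfying w''(t) = R(t)[w(t)] − λ·w(t) on [a,b], w(a) ∈ P, w'(a) + S[w(a)] ∈ P^⊥, and w(b) = 0 (for w = u and w = v). For each μ ∈ ℝ, let J_μ : [a,b] → ℝⁿ be the unique solution of J_μ''(t) = R(t)[J_μ(t)] − μ·J_μ(t) with J_μ(a) = u(a) and J_μ'(a) = u'(a). Then the map μ ↦ (J_μ(b), J_μ'(b)) ∈ ℝⁿ × ℝⁿ is differentiable at μ = λ, and, denoting its derivative there by (w₀, w₁) ∈ ℝⁿ × ℝⁿ, one has ∫ₐᵇ g(u(t), v(t)) dt = ω[(w₀, w₁), (0, v'(b))], where ω[(x₁,x₂),(y₁,y₂)] = g(x₁,y₂) − g(x₂,y₁). -/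

import Mathlib

/-!
The difference quotient `D_μ = (J_μ - J_λ) / (μ - λ)` solves `D'' = R D - μ D - J_λ` with zero
initial data. Grönwall's inequality therefore bounds `D_μ` uniformly for `μ` near `λ` and shows that
`μ ↦ (D_μ(b), D_μ'(b))` is Lipschitz on a punctured neighbourhood of `λ`, so it converges as
`μ → λ`: this is the derivative. Because `R` is `g`-symmetric, integrating the Wronskian of `D_μ`
and `v` over `[a, b]` and using `v(b) = 0` gives
`g(D_μ(b), v'(b)) = ∫ g(J_λ, v) + (μ - λ) ∫ g(D_μ, v)`. Let `μ → λ`; finally `J_λ = u` by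
uniqueness for the initial value problem.
-/

open Set

/-- The symplectic form `ω` on `ℝ²ⁿ = ℝⁿ × ℝⁿ` associated to `g`:
`ω[(x₁,x₂),(y₁,y₂)] = g(x₁,y₂) − g(x₂,y₁)`. -/
noncomputable def symplForm {n : ℕ} (g : (Fin n → ℝ) →ₗ[ℝ] (Fin n → ℝ) →ₗ[ℝ] ℝ)
    (x y : (Fin n → ℝ) × (Fin n → ℝ)) : ℝ :=
  g x.1 y.2 - g x.2 y.1

/-- The `g`-orthogonal complement of `P` in `ℝⁿ`. -/
def gOrtho {n : ℕ} (g : (Fin n → ℝ) →ₗ[ℝ] (Fin n → ℝ) →ₗ[ℝ] ℝ)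
    (P : Submodule ℝ (Fin n → ℝ)) : Set (Fin n → ℝ) :=
  {x | ∀ p ∈ P, g x p = 0}

open Filter Topology Metric

section LinearSecondOrder

variable {E : Type*} [NormedAddCommGroup E] [NormedSpace ℝ E]

/-- `y` solves `y'' = R y - μ y + f` on `[a, b]`, with `y₁` standing for `y'`. -/
def SolvesOn (R : ℝ → E →L[ℝ] E) (μ : ℝ) (f : ℝ → E) (a b : ℝ) (y y₁ : ℝ → E) : Prop :=
  ∀ t ∈ Icc a b, HasDerivWithinAt y (y₁ t) (Icc a b) t ∧
    HasDerivWithinAt y₁ (R t (y t) - μ • y t + f t) (Icc a b) t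

variable {R : ℝ → E →L[ℝ] E} {a b lam μ ν : ℝ}

theorem solvesOn_of_contDiffOn {w : ℝ → E} (hab : a < b) (hw : ContDiffOn ℝ 2 w (Icc a b))
    (hw₂ : ∀ t ∈ Icc a b,
      derivWithin (derivWithin w (Icc a b)) (Icc a b) t = R t (w t) - μ • w t) :
    SolvesOn R μ 0 a b w (derivWithin w (Icc a b)) := by
  have hw₁ : ContDiffOn ℝ 1 (derivWithin w (Icc a b)) (Icc a b) :=
    hw.derivWithin (uniqueDiffOn_Icc hab) (by norm_num)
  intro t ht
  refine ⟨(hw.differentiableOn (by norm_num) t ht).hasDerivWithinAt, ?_⟩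
  rw [Pi.zero_apply, add_zero, ← hw₂ t ht]
  exact (hw₁.differentiableOn one_ne_zero t ht).hasDerivWithinAt

theorem exists_opNorm_add_abs_le (hRc : ContinuousOn R (Icc a b)) (lam : ℝ) :
    ∃ K, 1 ≤ K ∧ ∀ μ ∈ closedBall lam 1, ∀ t ∈ Icc a b, ‖R t‖ + |μ| ≤ K := by
  obtain ⟨K₀, hK₀⟩ := isCompact_Icc.exists_bound_of_continuousOn hRc
  refine ⟨max K₀ 0 + |lam| + 1, by linarith [abs_nonneg lam, le_max_right K₀ 0],
    fun μ hμ t ht => ?_⟩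
  rw [mem_closedBall, Real.dist_eq] at hμ
  linarith [hK₀ t ht, le_max_left K₀ 0, abs_sub_abs_le_abs_sub μ lam]

theorem gronwallBound_le_mul {K ε x y : ℝ} (hK : 0 < K) (hε : 0 ≤ ε) (hxy : x ≤ y) :
    gronwallBound 0 K ε x ≤ ε * gronwallBound 0 K 1 y := by
  have hexp : Real.exp (K * x) ≤ Real.exp (K * y) := Real.exp_le_exp.2 (by nlinarith)
  rw [gronwallBound_of_K_ne_0 hK.ne', gronwallBound_of_K_ne_0 hK.ne']
  calc 0 * Real.exp (K * x) + ε / K * (Real.exp (K * x) - 1)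
      ≤ ε / K * (Real.exp (K * y) - 1) := by
        rw [zero_mul, zero_add]
        exact mul_le_mul_of_nonneg_left (by linarith) (div_nonneg hε hK.le)
    _ = ε * (0 * Real.exp (K * y) + 1 / K * (Real.exp (K * y) - 1)) := by ring

namespace SolvesOn

variable {f h y y₁ z z₁ : ℝ → E}

theorem continuousOn (hy : SolvesOn R μ f a b y y₁) : ContinuousOn y (Icc a b) :=
  fun t ht => (hy t ht).1.continuousWithinAt

theorem continuousOn_deriv (hy : SolvesOn R μ f a b y y₁) : ContinuousOn y₁ (Icc a b) :=
  fun t ht => (hy t ht).2.continuousWithinAt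

theorem sub (hy : SolvesOn R μ f a b y y₁) (hz : SolvesOn R ν h a b z z₁) :
    SolvesOn R μ (f - h + (ν - μ) • z) a b (y - z) (y₁ - z₁) := fun t ht =>
  ⟨(hy t ht).1.sub (hz t ht).1, by
    convert (hy t ht).2.sub (hz t ht).2 using 1
    simp only [Pi.add_apply, Pi.sub_apply, Pi.smul_apply, map_sub, smul_sub, sub_smul]
    abel⟩

theorem const_smul (hy : SolvesOn R μ f a b y y₁) (c : ℝ) :
    SolvesOn R μ (c • f) a b (c • y) (c • y₁) := fun t ht =>
  ⟨(hy t ht).1.const_smul c, by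
    convert (hy t ht).2.const_smul c using 1
    simp only [Pi.smul_apply, map_smul, smul_add, smul_sub, smul_comm c μ]⟩

/-- Grönwall's inequality applied to the first-order system satisfied by `(y, y')`. -/
theorem norm_le (hy : SolvesOn R μ f a b y y₁) {K ε : ℝ} (hK : 1 ≤ K)
    (hR : ∀ t ∈ Icc a b, ‖R t‖ + |μ| ≤ K) (hf : ∀ t ∈ Icc a b, ‖f t‖ ≤ ε)
    (hya : y a = 0) (hy₁a : y₁ a = 0) :
    ∀ t ∈ Icc a b, ‖(y t, y₁ t)‖ ≤ ε * gronwallBound 0 K 1 (b - a) := by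
  intro t ht
  have hε : 0 ≤ ε := (norm_nonneg _).trans (hf t ht)
  have hderiv : ∀ s ∈ Ico a b, HasDerivWithinAt (fun s => (y s, y₁ s))
      (y₁ s, R s (y s) - μ • y s + f s) (Ici s) s := fun s hs =>
    ((hy s (Ico_subset_Icc_self hs)).1.prodMk (hy s (Ico_subset_Icc_self hs)).2)
      |>.mono_of_mem_nhdsWithin (Icc_mem_nhdsGE_of_mem hs)
  have hbound : ∀ s ∈ Ico a b,
      ‖(y₁ s, R s (y s) - μ • y s + f s)‖ ≤ K * ‖(y s, y₁ s)‖ + ε := by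
    intro s hs
    have hs' := Ico_subset_Icc_self hs
    have hys : ‖y s‖ ≤ ‖(y s, y₁ s)‖ := norm_fst_le (y s, y₁ s)
    have hy₁s : ‖y₁ s‖ ≤ ‖(y s, y₁ s)‖ := norm_snd_le (y s, y₁ s)
    have hRy : ‖R s (y s) - μ • y s‖ ≤ (‖R s‖ + |μ|) * ‖y s‖ := by
      calc ‖R s (y s) - μ • y s‖ ≤ ‖R s (y s)‖ + ‖μ • y s‖ := norm_sub_le _ _
        _ ≤ ‖R s‖ * ‖y s‖ + |μ| * ‖y s‖ := by
          rw [norm_smul, Real.norm_eq_abs]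
          exact add_le_add_left ((R s).le_opNorm _) _
        _ = (‖R s‖ + |μ|) * ‖y s‖ := by ring
    rw [Prod.norm_def]
    refine max_le (by nlinarith [norm_nonneg (y₁ s)]) ?_
    calc ‖R s (y s) - μ • y s + f s‖ ≤ ‖R s (y s) - μ • y s‖ + ‖f s‖ := norm_add_le _ _
      _ ≤ K * ‖(y s, y₁ s)‖ + ε := by
        nlinarith [hR s hs', hf s hs', norm_nonneg (y s), norm_nonneg (R s), abs_nonneg μ]
  calc ‖(y t, y₁ t)‖ ≤ gronwallBound 0 K ε (t - a) :=
        norm_le_gronwallBound_of_norm_deriv_right_le (hy.continuousOn.prodMk hy.continuousOn_deriv)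
          hderiv (by simp [hya, hy₁a]) hbound t ht
    _ ≤ ε * gronwallBound 0 K 1 (b - a) :=
        gronwallBound_le_mul (by linarith) hε (by linarith [ht.2])

theorem eqOn (hy : SolvesOn R μ 0 a b y y₁) (hz : SolvesOn R μ 0 a b z z₁)
    (hRc : ContinuousOn R (Icc a b)) (ha : y a = z a) (ha₁ : y₁ a = z₁ a) :
    EqOn y z (Icc a b) := by
  intro t ht
  obtain ⟨K, hK, hR⟩ := exists_opNorm_add_abs_le hRc μ
  have hdiff := (hy.sub hz).norm_le (ε := 0) hK (hR μ (mem_closedBall_self zero_le_one))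
    (fun s _ => by simp) (by simp [ha]) (by simp [ha₁]) t ht
  rw [zero_mul, norm_le_zero_iff] at hdiff
  exact sub_eq_zero.1 (congrArg Prod.fst hdiff)

/-- The Wronskian `G(y', z) - G(y, z')` has derivative `(λ - μ) G(y, z) + G(f, z)` because `R`
is `G`-symmetric. -/
theorem lagrange_identity {G : E →L[ℝ] E →L[ℝ] ℝ}
    (hG : ∀ t ∈ Icc a b, ∀ x x', G (R t x) x' = G x (R t x')) (hab : a ≤ b)
    (hy : SolvesOn R μ f a b y y₁) (hf : ContinuousOn f (Icc a b))
    (hz : SolvesOn R lam 0 a b z z₁) (hya : y a = 0) (hy₁a : y₁ a = 0) (hzb : z b = 0) :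
    G (y b) (z₁ b) = (μ - lam) * (∫ t in a..b, G (y t) (z t)) - ∫ t in a..b, G (f t) (z t) := by
  have hcont : ∀ {p q : ℝ → E}, ContinuousOn p (Icc a b) → ContinuousOn q (Icc a b) →
      ContinuousOn (fun t => G (p t) (q t)) (Icc a b) := fun hp hq =>
    (G.continuous.comp_continuousOn hp).clm_apply hq
  have hint : ∀ {p q : ℝ → E}, ContinuousOn p (Icc a b) → ContinuousOn q (Icc a b) →
      IntervalIntegrable (fun t => G (p t) (q t)) MeasureTheory.volume a b := fun hp hq =>
    (hcont hp hq).intervalIntegrable_of_Icc hab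
  have hW : ∀ t ∈ Ioo a b, HasDerivAt (fun t => G (y₁ t) (z t) - G (y t) (z₁ t))
      ((lam - μ) * G (y t) (z t) + G (f t) (z t)) t := by
    intro t ht
    have hnhds := Icc_mem_nhds ht.1 ht.2
    obtain ⟨hy', hy₁'⟩ := hy t (Ioo_subset_Icc_self ht)
    obtain ⟨hz', hz₁'⟩ := hz t (Ioo_subset_Icc_self ht)
    refine ((G.hasDerivAt_of_bilinear (fun _ => hy₁'.hasDerivAt hnhds)
      (fun _ => hz'.hasDerivAt hnhds)).sub (G.hasDerivAt_of_bilinear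
        (fun _ => hy'.hasDerivAt hnhds) (fun _ => hz₁'.hasDerivAt hnhds))).congr_deriv ?_
    simp only [map_add, map_sub, map_smul, add_apply, sub_apply, smul_apply, smul_eq_mul,
      Pi.zero_apply, add_zero, hG t (Ioo_subset_Icc_self ht)]
    ring
  have hftc := intervalIntegral.integral_eq_sub_of_hasDerivAt_of_le hab
    ((hcont hy.continuousOn_deriv hz.continuousOn).sub
      (hcont hy.continuousOn hz.continuousOn_deriv))
    hW (((hint hy.continuousOn hz.continuousOn).const_mul _).add (hint hf hz.continuousOn))
  rw [intervalIntegral.integral_add ((hint hy.continuousOn hz.continuousOn).const_mul _)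
    (hint hf hz.continuousOn), intervalIntegral.integral_const_mul] at hftc
  simp only [Pi.sub_apply, hya, hy₁a, hzb, map_zero, zero_apply, sub_self, sub_zero,
    zero_sub] at hftc
  linarith

end SolvesOn

section Family

variable {J J₁ : ℝ → ℝ → E} {x₀ x₁ : E}

theorem solvesOn_slope (hJ : ∀ μ, SolvesOn R μ 0 a b (J μ) (J₁ μ)) (hμ : μ ≠ lam) :
    SolvesOn R μ (-J lam) a b (slope J lam μ) (slope J₁ lam μ) := by
  rw [slope_def_module, slope_def_module]
  convert ((hJ μ).sub (hJ lam)).const_smul (μ - lam)⁻¹ using 1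
  ext t
  simp only [Pi.neg_apply, Pi.smul_apply, sub_self, zero_add, smul_smul]
  rw [← neg_sub μ lam, mul_neg, inv_mul_cancel₀ (sub_ne_zero.2 hμ), neg_one_smul]

theorem norm_slope_le (hJ : ∀ μ, SolvesOn R μ 0 a b (J μ) (J₁ μ)) (hJa : ∀ μ, J μ a = x₀)
    (hJ₁a : ∀ μ, J₁ μ a = x₁) {K M : ℝ} (hK : 1 ≤ K)
    (hR : ∀ μ ∈ closedBall lam 1, ∀ t ∈ Icc a b, ‖R t‖ + |μ| ≤ K)
    (hM : ∀ t ∈ Icc a b, ‖J lam t‖ ≤ M) (hμ : μ ∈ closedBall lam 1 \ {lam}) {t : ℝ}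
    (ht : t ∈ Icc a b) :
    ‖(slope J lam μ t, slope J₁ lam μ t)‖ ≤ M * gronwallBound 0 K 1 (b - a) :=
  (solvesOn_slope hJ hμ.2).norm_le hK (hR μ hμ.1) (fun s hs => by simpa using hM s hs)
    (by simp [slope_def_module, hJa]) (by simp [slope_def_module, hJ₁a]) t ht

theorem norm_slope_sub_slope_le (hJ : ∀ μ, SolvesOn R μ 0 a b (J μ) (J₁ μ))
    (hJa : ∀ μ, J μ a = x₀) (hJ₁a : ∀ μ, J₁ μ a = x₁) {K M : ℝ} (hK : 1 ≤ K)
    (hR : ∀ μ ∈ closedBall lam 1, ∀ t ∈ Icc a b, ‖R t‖ + |μ| ≤ K)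
    (hM : ∀ t ∈ Icc a b, ‖J lam t‖ ≤ M) (hμ : μ ∈ closedBall lam 1 \ {lam})
    (hν : ν ∈ closedBall lam 1 \ {lam}) {t : ℝ} (ht : t ∈ Icc a b) :
    ‖(slope J lam μ t, slope J₁ lam μ t) - (slope J lam ν t, slope J₁ lam ν t)‖ ≤
      M * gronwallBound 0 K 1 (b - a) * gronwallBound 0 K 1 (b - a) * |μ - ν| := by
  have hforcing : ∀ s ∈ Icc a b, ‖(-J lam - -J lam + (ν - μ) • slope J lam ν) s‖ ≤
      |μ - ν| * (M * gronwallBound 0 K 1 (b - a)) := fun s hs => by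
    rw [Pi.add_apply, Pi.sub_apply, sub_self, zero_add, Pi.smul_apply, norm_smul,
      Real.norm_eq_abs, abs_sub_comm]
    exact mul_le_mul_of_nonneg_left
      ((norm_fst_le _).trans (norm_slope_le hJ hJa hJ₁a hK hR hM hν hs)) (abs_nonneg _)
  refine (((solvesOn_slope hJ hμ.2).sub (solvesOn_slope hJ hν.2)).norm_le hK (hR μ hμ.1)
    hforcing (by simp [slope_def_module, hJa]) (by simp [slope_def_module, hJ₁a]) t ht).trans_eq ?_
  ring

theorem exists_hasDerivAt_of_solvesOn [CompleteSpace E] (hRc : ContinuousOn R (Icc a b))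
    (hJ : ∀ μ, SolvesOn R μ 0 a b (J μ) (J₁ μ)) (hJa : ∀ μ, J μ a = x₀)
    (hJ₁a : ∀ μ, J₁ μ a = x₁) (lam : ℝ) {t : ℝ} (ht : t ∈ Icc a b) :
    ∃ L, HasDerivAt (fun μ => (J μ t, J₁ μ t)) L lam := by
  obtain ⟨K, hK, hR⟩ := exists_opNorm_add_abs_le hRc lam
  obtain ⟨M, hM⟩ := isCompact_Icc.exists_bound_of_continuousOn (hJ lam).continuousOn
  have hlip : LipschitzOnWith _ (slope (fun μ => (J μ t, J₁ μ t)) lam)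
      (closedBall lam 1 \ {lam}) := LipschitzOnWith.of_dist_le' fun μ hμ ν hν => by
    rw [dist_eq_norm, Real.dist_eq]
    exact norm_slope_sub_slope_le hJ hJa hJ₁a hK hR hM hμ hν ht
  have hpunct : 𝓝[≠] lam ≤ 𝓟 (closedBall lam 1 \ {lam}) :=
    le_principal_iff.2 (sdiff_mem_nhdsWithin_compl (closedBall_mem_nhds lam one_pos) _)
  obtain ⟨L, hL⟩ := cauchy_map_iff_exists_tendsto.1
    ((cauchy_nhds.mono nhdsWithin_le_nhds).map_of_le hlip.uniformContinuousOn hpunct)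
  exact ⟨L, hasDerivAt_iff_tendsto_slope.2 hL⟩

theorem integral_eq_of_hasDerivAt_solvesOn {G : E →L[ℝ] E →L[ℝ] ℝ}
    (hG : ∀ t ∈ Icc a b, ∀ x x', G (R t x) x' = G x (R t x')) (hab : a ≤ b)
    (hRc : ContinuousOn R (Icc a b)) (hJ : ∀ μ, SolvesOn R μ 0 a b (J μ) (J₁ μ))
    (hJa : ∀ μ, J μ a = x₀) (hJ₁a : ∀ μ, J₁ μ a = x₁) {v v₁ : ℝ → E}
    (hv : SolvesOn R lam 0 a b v v₁) (hvb : v b = 0) {L : E × E}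
    (hL : HasDerivAt (fun μ => (J μ b, J₁ μ b)) L lam) :
    ∫ t in a..b, G (J lam t) (v t) = G L.1 (v₁ b) := by
  obtain ⟨K, hK, hR⟩ := exists_opNorm_add_abs_le hRc lam
  obtain ⟨M, hM⟩ := isCompact_Icc.exists_bound_of_continuousOn (hJ lam).continuousOn
  obtain ⟨Mv, hMv⟩ := isCompact_Icc.exists_bound_of_continuousOn hv.continuousOn
  have hpunct : ∀ᶠ μ in 𝓝[≠] lam, μ ∈ closedBall lam 1 \ {lam} :=
    sdiff_mem_nhdsWithin_compl (closedBall_mem_nhds lam one_pos) _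
  have hlagrange : ∀ μ ∈ closedBall lam 1 \ {lam},
      G (slope J lam μ b) (v₁ b) - (μ - lam) * ∫ t in a..b, G (slope J lam μ t) (v t) =
        ∫ t in a..b, G (J lam t) (v t) := fun μ hμ => by
    rw [(solvesOn_slope hJ hμ.2).lagrange_identity hG hab (hJ lam).continuousOn.neg hv
      (by simp [slope_def_module, hJa]) (by simp [slope_def_module, hJ₁a]) hvb]
    simp [intervalIntegral.integral_neg]
  have hbounded : ∀ μ ∈ closedBall lam 1 \ {lam}, ‖∫ t in a..b, G (slope J lam μ t) (v t)‖ ≤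
      ‖G‖ * (M * gronwallBound 0 K 1 (b - a)) * Mv * |b - a| := fun μ hμ =>
    intervalIntegral.norm_integral_le_of_norm_le_const fun t ht => by
      have ht' : t ∈ Icc a b := Ioc_subset_Icc_self (uIoc_of_le hab ▸ ht)
      calc ‖G (slope J lam μ t) (v t)‖ ≤ ‖G‖ * ‖slope J lam μ t‖ * ‖v t‖ := G.le_opNorm₂ _ _
        _ ≤ ‖G‖ * (M * gronwallBound 0 K 1 (b - a)) * Mv := by
          have hslope := (norm_fst_le _).trans (norm_slope_le hJ hJa hJ₁a hK hR hM hμ ht')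
          exact mul_le_mul (mul_le_mul_of_nonneg_left hslope (norm_nonneg G)) (hMv t ht')
            (norm_nonneg _) (mul_nonneg (norm_nonneg G) ((norm_nonneg _).trans hslope))
  have hboundary : Tendsto (fun μ => G (slope J lam μ b) (v₁ b)) (𝓝[≠] lam)
      (𝓝 (G L.1 (v₁ b))) :=
    ((G.flip (v₁ b)).continuous.tendsto _).comp
      ((continuous_fst.tendsto _).comp (hasDerivAt_iff_tendsto_slope.1 hL))
  have hremainder : Tendsto (fun μ => (μ - lam) * ∫ t in a..b, G (slope J lam μ t) (v t))
      (𝓝[≠] lam) (𝓝 0) :=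
    (tendsto_sub_nhds_zero_iff.2 (tendsto_id.mono_left nhdsWithin_le_nhds))
      |>.zero_mul_isBoundedUnder_le (isBoundedUnder_of_eventually_le (hpunct.mono hbounded))
  have hlim := (hboundary.sub hremainder).congr' (hpunct.mono hlagrange)
  rw [sub_zero] at hlim
  exact tendsto_nhds_unique tendsto_const_nhds hlim

end Family

end LinearSecondOrder

theorem deriv_in_eigenvalue_integral_formula_general {n : ℕ}
    (g : (Fin n → ℝ) →ₗ[ℝ] (Fin n → ℝ) →ₗ[ℝ] ℝ)
    (R : ℝ → (Fin n → ℝ) →L[ℝ] (Fin n → ℝ))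
    (a b : ℝ) (hab : a < b)
    (hRcont : ContinuousOn R (Icc a b))
    (hRsymm : ∀ t ∈ Icc a b, ∀ x y, g (R t x) y = g x (R t y))
    (lam : ℝ) (u v : ℝ → Fin n → ℝ)
    (hu : ContDiffOn ℝ 2 u (Icc a b))
    (hueq : ∀ t ∈ Icc a b,
      derivWithin (derivWithin u (Icc a b)) (Icc a b) t = R t (u t) - lam • u t)
    (hv : ContDiffOn ℝ 2 v (Icc a b))
    (hveq : ∀ t ∈ Icc a b,
      derivWithin (derivWithin v (Icc a b)) (Icc a b) t = R t (v t) - lam • v t)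
    (hvb : v b = 0)
    (J : ℝ → ℝ → Fin n → ℝ)
    (hJc : ∀ μ : ℝ, ContDiffOn ℝ 2 (J μ) (Icc a b))
    (hJeq : ∀ μ : ℝ, ∀ t ∈ Icc a b,
      derivWithin (derivWithin (J μ) (Icc a b)) (Icc a b) t = R t (J μ t) - μ • J μ t)
    (hJa : ∀ μ : ℝ, J μ a = u a)
    (hJa' : ∀ μ : ℝ, derivWithin (J μ) (Icc a b) a = derivWithin u (Icc a b) a) :
    ∃ w₀ w₁ : Fin n → ℝ,
      HasDerivAt (fun μ : ℝ => (J μ b, derivWithin (J μ) (Icc a b) b)) (w₀, w₁) lam ∧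
      (∫ t in a..b, g (u t) (v t))
        = symplForm g (w₀, w₁) (0, derivWithin v (Icc a b) b) := by
  have hJ μ := solvesOn_of_contDiffOn hab (hJc μ) (hJeq μ)
  have hJu : EqOn (J lam) u (Icc a b) :=
    (hJ lam).eqOn (solvesOn_of_contDiffOn hab hu hueq) hRcont (hJa lam) (hJa' lam)
  obtain ⟨⟨w₀, w₁⟩, hL⟩ :=
    exists_hasDerivAt_of_solvesOn hRcont hJ hJa hJa' lam (right_mem_Icc.2 hab.le)
  refine ⟨w₀, w₁, hL, ?_⟩
  calc ∫ t in a..b, g (u t) (v t)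
      = ∫ t in a..b, g.toContinuousBilinearMap (J lam t) (v t) :=
        intervalIntegral.integral_congr fun t ht => by
          rw [uIcc_of_le hab.le] at ht
          simp [hJu ht]
    _ = symplForm g (w₀, w₁) (0, derivWithin v (Icc a b) b) := by
      rw [integral_eq_of_hasDerivAt_solvesOn hRsymm hab.le hRcont hJ hJa hJa'
        (solvesOn_of_contDiffOn hab hv hveq) hvb hL]
      simp [symplForm]

/-- Differentiability in the eigenvalue parameter of the endpoint data of the family of
solutions `J_μ`, and the integral formula
`∫ₐᵇ g(u,v) dt = ω[(d/dμ)|_{μ=λ} (J_μ(b), J_μ'(b)), (0, v'(b))]`. -/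
theorem deriv_in_eigenvalue_integral_formula {n : ℕ}
    (g : (Fin n → ℝ) →ₗ[ℝ] (Fin n → ℝ) →ₗ[ℝ] ℝ)
    (R : ℝ → (Fin n → ℝ) →L[ℝ] (Fin n → ℝ))
    (P : Submodule ℝ (Fin n → ℝ)) (S : (Fin n → ℝ) →ₗ[ℝ] (Fin n → ℝ))
    (a b : ℝ) (hab : a < b)
    (hgsymm : ∀ x y, g x y = g y x)
    (hgnd : ∀ x, (∀ y, g x y = 0) → x = 0)
    (hRcont : ContinuousOn R (Icc a b))
    (hRsymm : ∀ t ∈ Icc a b, ∀ x y, g (R t x) y = g x (R t y))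
    (hPnd : ∀ x ∈ P, (∀ y ∈ P, g x y = 0) → x = 0)
    (hSP : ∀ x ∈ P, S x ∈ P)
    (hSsymm : ∀ x ∈ P, ∀ y ∈ P, g (S x) y = g x (S y))
    (lam : ℝ) (u v : ℝ → Fin n → ℝ)
    (hu : ContDiffOn ℝ 2 u (Icc a b))
    (hueq : ∀ t ∈ Icc a b,
      derivWithin (derivWithin u (Icc a b)) (Icc a b) t = R t (u t) - lam • u t)
    (huP : u a ∈ P)
    (huS : (derivWithin u (Icc a b) a + S (u a)) ∈ gOrtho g P)
    (hub : u b = 0)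
    (hv : ContDiffOn ℝ 2 v (Icc a b))
    (hveq : ∀ t ∈ Icc a b,
      derivWithin (derivWithin v (Icc a b)) (Icc a b) t = R t (v t) - lam • v t)
    (hvP : v a ∈ P)
    (hvS : (derivWithin v (Icc a b) a + S (v a)) ∈ gOrtho g P)
    (hvb : v b = 0)
    (J : ℝ → ℝ → Fin n → ℝ)
    (hJc : ∀ μ : ℝ, ContDiffOn ℝ 2 (J μ) (Icc a b))
    (hJeq : ∀ μ : ℝ, ∀ t ∈ Icc a b,
      derivWithin (derivWithin (J μ) (Icc a b)) (Icc a b) t = R t (J μ t) - μ • J μ t)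
    (hJa : ∀ μ : ℝ, J μ a = u a)
    (hJa' : ∀ μ : ℝ, derivWithin (J μ) (Icc a b) a = derivWithin u (Icc a b) a) :
    ∃ w₀ w₁ : Fin n → ℝ,
      HasDerivAt (fun μ : ℝ => (J μ b, derivWithin (J μ) (Icc a b) b)) (w₀, w₁) lam ∧
      (∫ t in a..b, g (u t) (v t))
        = symplForm g (w₀, w₁) (0, derivWithin v (Icc a b) b) :=
  deriv_in_eigenvalue_integral_formula_general g R a b hab hRcont hRsymm lam u v hu hueq hv hveq hvb
    J hJc hJeq hJa hJa'
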